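/- For every D ≥ 1 and every assignment of real coefficients α_I to the nonempty subsets I of Fin D, the 2^D × 2^D unitary exp(−j · ∑_{∅ ≠ I ⊆ Fin D} α_I · Z_I) can be written as a product of at most (D−1)·2^D + 1 matrices, each of which is either a CNOT gate CNOT_{c,t} (for some c ≠ t in Fin D) or a single-qubit rotation exp(−j·θ·Z_{{q}}) (for some q ∈ Fin D and θ ∈ ℝ). -/

import Mathlib

open Matrix

noncomputable section

/-- The Pauli-Z monomial `Z_S`: the `2^n × 2^n` diagonal matrix (rows and columns indexed
by bitstrings `x : Fin n → Bool`) whose diagonal entry at `x` is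
`(-1) ^ |{i ∈ S : x i = true}|`. -/
def PauliZ {n : ℕ} (S : Finset (Fin n)) : Matrix (Fin n → Bool) (Fin n → Bool) ℂ :=
  Matrix.diagonal fun x => (-1 : ℂ) ^ (S.filter fun i => x i = true).card

/-- The action of `CNOT c t` on bitstrings: flip bit `t` when bit `c` is set. -/
def cnotFun {n : ℕ} (c t : Fin n) (x : Fin n → Bool) : Fin n → Bool :=
  Function.update x t (xor (x t) (x c))

/-- The CNOT gate with control `c` and target `t`: the permutation matrix sending the
standard basis vector `e_x` to `e_(cnotFun c t x)`. -/
def CNOT {n : ℕ} (c t : Fin n) : Matrix (Fin n → Bool) (Fin n → Bool) ℂ :=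
  Matrix.of fun y x => if y = cnotFun c t x then 1 else 0

/-!
Conjugating `Z_S` by `CNOT_{c,t}` with `t ∈ S` and `c ∉ S` gives `Z_{S ∪ {c}}`, because the gate
XORs bit `c` into bit `t`. So for `q ∈ I`, the rotation `exp(-jθ Z_q)` sandwiched between the CNOTs
`CNOT_{c,q}`, `c ∈ I \ {q}`, is `exp(-jθ Z_I)`, at a cost of `2|I| - 1` gates. The `Z_I` commute,
so the exponential of the Ising sum is the product of these blocks, and pairing each `I` with its
complement gives `∑_I |I| = D 2^(D-1)`, whence `∑_{I ≠ ∅} (2|I| - 1) = (D - 1) 2^D + 1`.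
-/

open NormedSpace

theorem Matrix.exp_conj_of_mul_self_eq_one {m 𝔸 : Type*} [Fintype m] [DecidableEq m]
    [NormedCommRing 𝔸] [NormedAlgebra ℚ 𝔸] [CompleteSpace 𝔸] {U : Matrix m m 𝔸}
    (hU : U * U = 1) (A : Matrix m m 𝔸) : U * exp A * U = exp (U * A * U) := by
  have hinv : U⁻¹ = U := inv_eq_right_inv hU
  simpa only [hinv] using (exp_conj U A ⟨⟨U, U, hU, hU⟩, rfl⟩).symm

theorem Finset.two_mul_sum_card (α : Type*) [Fintype α] [DecidableEq α] :
    2 * ∑ I : Finset α, I.card = Fintype.card α * 2 ^ Fintype.card α := by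
  have hcompl : ∑ I : Finset α, Iᶜ.card = ∑ I : Finset α, I.card :=
    Fintype.sum_bijective (·ᶜ) compl_bijective _ _ fun _ => rfl
  calc 2 * ∑ I : Finset α, I.card = ∑ I : Finset α, (I.card + Iᶜ.card) := by
        rw [Finset.sum_add_distrib, hcompl, two_mul]
    _ = Fintype.card α * 2 ^ Fintype.card α := by
        simp [Finset.card_add_card_compl, Fintype.card_finset, mul_comm]

theorem Finset.sum_filter_nonempty_two_mul_card_sub_one (α : Type*) [Fintype α]
    [DecidableEq α] :
    ∑ I ∈ Finset.univ.filter (fun I : Finset α => I.Nonempty), (2 * I.card - 1) +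
      2 ^ Fintype.card α = Fintype.card α * 2 ^ Fintype.card α + 1 := by
  set 𝒮 := Finset.univ.filter fun I : Finset α => I.Nonempty
  have hsum : ∑ I ∈ 𝒮, (2 * I.card - 1) + 𝒮.card = ∑ I ∈ 𝒮, 2 * I.card := by
    rw [Finset.card_eq_sum_ones, ← Finset.sum_add_distrib]
    refine Finset.sum_congr rfl fun I hI => ?_
    have := (Finset.mem_filter.mp hI).2.card_pos
    omega
  have hfilter : ∑ I ∈ 𝒮, 2 * I.card = 2 * ∑ I : Finset α, I.card := by
    rw [Finset.sum_filter_of_ne fun I _ h => Finset.card_pos.mp (by omega), Finset.mul_sum]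
  have hcard : 𝒮.card + 1 = 2 ^ Fintype.card α := by
    simp_rw [𝒮, Finset.nonempty_iff_ne_empty, Finset.filter_ne', Finset.card_erase_add_one
      (Finset.mem_univ _), Finset.card_univ, Fintype.card_finset]
  have := Finset.two_mul_sum_card α
  omega

variable {n : ℕ}

lemma cnotFun_involutive {c t : Fin n} (h : c ≠ t) : Function.Involutive (cnotFun c t) := by
  intro x
  funext i
  rcases eq_or_ne i t with rfl | hi
  · simp [cnotFun, Function.update_of_ne h]
  · simp [cnotFun, Function.update_of_ne hi]

lemma cnot_eq_permMatrix {c t : Fin n} (h : c ≠ t) :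
    CNOT c t = ((cnotFun_involutive h).toPerm _).permMatrix ℂ := by
  ext y x
  simp only [CNOT, of_apply, PEquiv.toMatrix_apply, Equiv.toPEquiv_apply, Option.mem_def,
    Option.some_inj, Function.Involutive.coe_toPerm]
  simp_rw [← (cnotFun_involutive h).eq_iff]

lemma cnot_mul_diagonal_mul_cnot {c t : Fin n} (h : c ≠ t) (d : (Fin n → Bool) → ℂ) :
    CNOT c t * diagonal d * CNOT c t = diagonal (d ∘ cnotFun c t) := by
  rw [cnot_eq_permMatrix h, PEquiv.toMatrix_toPEquiv_mul, PEquiv.mul_toMatrix_toPEquiv]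
  exact submatrix_diagonal_equiv d _

lemma cnot_mul_cnot {c t : Fin n} (h : c ≠ t) : CNOT c t * CNOT c t = 1 := by
  simpa [diagonal_one] using cnot_mul_diagonal_mul_cnot h 1

lemma pauliZ_eq_diagonal_prod (S : Finset (Fin n)) :
    PauliZ S = diagonal fun x => ∏ i ∈ S, if x i then (-1 : ℂ) else 1 := by
  simp_rw [PauliZ, ← Finset.prod_filter, Finset.prod_const]

lemma pauliZ_commute (S T : Finset (Fin n)) : Commute (PauliZ S) (PauliZ T) := by
  rw [pauliZ_eq_diagonal_prod, pauliZ_eq_diagonal_prod]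
  exact commute_diagonal _ _

lemma prod_sign_cnotFun {S : Finset (Fin n)} {c t : Fin n} (ht : t ∈ S) (hc : c ∉ S)
    (x : Fin n → Bool) :
    ∏ i ∈ S, (if cnotFun c t x i then (-1 : ℂ) else 1) =
      ∏ i ∈ insert c S, if x i then (-1 : ℂ) else 1 := by
  rw [Finset.prod_insert hc, ← Finset.mul_prod_erase S _ ht, ← Finset.mul_prod_erase S _ ht]
  have hrest : ∀ i ∈ S.erase t, cnotFun c t x i = x i := fun i hi =>
    Function.update_of_ne (Finset.ne_of_mem_erase hi) _ _
  rw [Finset.prod_congr rfl fun i hi => by rw [hrest i hi], cnotFun, Function.update_self]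
  cases x t <;> cases x c <;> simp

lemma cnot_mul_pauliZ_mul_cnot {S : Finset (Fin n)} {c t : Fin n} (ht : t ∈ S) (hc : c ∉ S) :
    CNOT c t * PauliZ S * CNOT c t = PauliZ (insert c S) := by
  rw [pauliZ_eq_diagonal_prod, pauliZ_eq_diagonal_prod,
    cnot_mul_diagonal_mul_cnot (ne_of_mem_of_not_mem ht hc).symm]
  exact congrArg diagonal (funext (prod_sign_cnotFun ht hc))

lemma cnot_mul_exp_mul_cnot {S : Finset (Fin n)} {c t : Fin n} (ht : t ∈ S) (hc : c ∉ S)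
    (z : ℂ) : CNOT c t * exp (z • PauliZ S) * CNOT c t = exp (z • PauliZ (insert c S)) := by
  rw [exp_conj_of_mul_self_eq_one (cnot_mul_cnot (ne_of_mem_of_not_mem ht hc).symm),
    mul_smul_comm, smul_mul_assoc, cnot_mul_pauliZ_mul_cnot ht hc]

lemma exp_sum_smul_pauliZ (s : Finset (Finset (Fin n))) (z : Finset (Fin n) → ℂ) :
    exp (∑ I ∈ s, z I • PauliZ I) = (s.toList.map fun I => exp (z I • PauliZ I)).prod := by
  rw [Matrix.exp_sum_of_commute s _ fun I _ J _ _ => ((pauliZ_commute I J).smul_left _).smul_right _,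
    ← Finset.noncommProd_toFinset _ _ _ s.nodup_toList]
  exact Finset.noncommProd_congr s.toList_toFinset.symm (fun _ _ => rfl) _

def IsCnotOrZRotation (A : Matrix (Fin n → Bool) (Fin n → Bool) ℂ) : Prop :=
  (∃ c t : Fin n, c ≠ t ∧ A = CNOT c t) ∨
    ∃ (q : Fin n) (θ : ℝ), A = exp ((-Complex.I * (θ : ℂ)) • PauliZ {q})

def cnotLadder (q : Fin n) (l : List (Fin n)) (θ : ℝ) :
    List (Matrix (Fin n → Bool) (Fin n → Bool) ℂ) :=
  l.map (CNOT · q) ++ exp ((-Complex.I * (θ : ℂ)) • PauliZ {q}) :: l.reverse.map (CNOT · q)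

lemma length_cnotLadder (q : Fin n) (l : List (Fin n)) (θ : ℝ) :
    (cnotLadder q l θ).length = 2 * l.length + 1 := by
  simp only [cnotLadder, List.length_append, List.length_map, List.length_cons,
    List.length_reverse]
  omega

lemma isCnotOrZRotation_of_mem_cnotLadder {q : Fin n} {l : List (Fin n)} (hq : q ∉ l)
    (θ : ℝ) : ∀ A ∈ cnotLadder q l θ, IsCnotOrZRotation A := by
  have hcnot : ∀ c ∈ l, IsCnotOrZRotation (CNOT c q) := fun c hc =>
    .inl ⟨c, q, fun h => hq (h ▸ hc), rfl⟩
  simp only [cnotLadder, List.mem_append, List.mem_cons, List.mem_map, List.mem_reverse]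
  rintro A (⟨c, hc, rfl⟩ | rfl | ⟨c, hc, rfl⟩)
  exacts [hcnot c hc, .inr ⟨q, θ, rfl⟩, hcnot c hc]

lemma prod_cnot_mul_exp_mul_prod_cnot {q : Fin n} {S : Finset (Fin n)} (hq : q ∈ S) (z : ℂ) :
    ∀ {l : List (Fin n)}, l.Nodup → (∀ c ∈ l, c ∉ S) →
      (l.map (CNOT · q)).prod * exp (z • PauliZ S) * (l.reverse.map (CNOT · q)).prod =
        exp (z • PauliZ (l.toFinset ∪ S))
  | [], _, _ => by simp
  | c :: l, hl, hlS => by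
    obtain ⟨hcl, hl⟩ := List.nodup_cons.mp hl
    have hcS : c ∉ l.toFinset ∪ S := by
      simpa [hcl] using hlS c List.mem_cons_self
    have ih := prod_cnot_mul_exp_mul_prod_cnot hq z hl fun d hd =>
      hlS d (List.mem_cons_of_mem c hd)
    calc _ = CNOT c q * ((l.map (CNOT · q)).prod * exp (z • PauliZ S) *
          (l.reverse.map (CNOT · q)).prod) * CNOT c q := by
          simp only [List.map_cons, List.reverse_cons, List.map_append, List.prod_cons,
            List.prod_append, List.map_nil, List.prod_nil, mul_one, mul_assoc]
      _ = exp (z • PauliZ ((c :: l).toFinset ∪ S)) := by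
          rw [ih, cnot_mul_exp_mul_cnot (Finset.mem_union_right _ hq) hcS, List.toFinset_cons,
            Finset.insert_union]

lemma prod_cnotLadder {q : Fin n} {l : List (Fin n)} (hl : l.Nodup) (hq : q ∉ l) (θ : ℝ) :
    (cnotLadder q l θ).prod = exp ((-Complex.I * (θ : ℂ)) • PauliZ (insert q l.toFinset)) := by
  rw [cnotLadder, List.prod_append, List.prod_cons, ← mul_assoc,
    prod_cnot_mul_exp_mul_prod_cnot (Finset.mem_singleton_self q) _ hl
      fun c hc => Finset.notMem_singleton.mpr fun h => hq (h ▸ hc),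
    Finset.union_singleton]

def monomialGates (θ : ℝ) (I : Finset (Fin n)) : List (Matrix (Fin n → Bool) (Fin n → Bool) ℂ) :=
  if h : I.Nonempty then cnotLadder (I.min' h) (I.erase (I.min' h)).toList θ else []

lemma length_monomialGates (θ : ℝ) (I : Finset (Fin n)) :
    (monomialGates θ I).length = 2 * I.card - 1 := by
  unfold monomialGates
  split_ifs with h
  · rw [length_cnotLadder, Finset.length_toList, Finset.card_erase_of_mem (I.min'_mem h)]
    have := h.card_pos
    omega
  · simp [Finset.not_nonempty_iff_eq_empty.mp h]

lemma isCnotOrZRotation_of_mem_monomialGates (θ : ℝ) (I : Finset (Fin n)) :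
    ∀ A ∈ monomialGates θ I, IsCnotOrZRotation A := by
  unfold monomialGates
  split_ifs with h
  · exact isCnotOrZRotation_of_mem_cnotLadder (by simp) θ
  · simp

lemma prod_monomialGates (θ : ℝ) {I : Finset (Fin n)} (hI : I.Nonempty) :
    (monomialGates θ I).prod = exp ((-Complex.I * (θ : ℂ)) • PauliZ I) := by
  rw [monomialGates, dif_pos hI, prod_cnotLadder (Finset.nodup_toList _) (by simp),
    Finset.toList_toFinset, Finset.insert_erase (I.min'_mem hI)]

theorem monomial_hamiltonian_synthesis_general {D : ℕ}
    (α : Finset (Fin D) → ℝ) :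
    ∃ L : List (Matrix (Fin D → Bool) (Fin D → Bool) ℂ),
      L.length ≤ (D - 1) * 2 ^ D + 1 ∧
      (∀ A ∈ L,
        (∃ c t : Fin D, c ≠ t ∧ A = CNOT c t) ∨
        (∃ (q : Fin D) (θ : ℝ),
          A = NormedSpace.exp ((-Complex.I * (θ : ℂ)) • PauliZ {q}))) ∧
      L.prod = NormedSpace.exp ((-Complex.I) •
        ∑ I ∈ Finset.univ.filter (fun I : Finset (Fin D) => I.Nonempty),
          (α I : ℂ) • PauliZ I) := by
  have hcount := Finset.sum_filter_nonempty_two_mul_card_sub_one (Fin D)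
  rw [Fintype.card_fin] at hcount
  set 𝒮 := Finset.univ.filter fun I : Finset (Fin D) => I.Nonempty
  refine ⟨(𝒮.toList.map fun I => monomialGates (α I) I).flatten, ?_, ?_, ?_⟩
  · simp only [List.length_flatten, List.map_map, Function.comp_def, length_monomialGates,
      Finset.sum_map_toList, Nat.sub_one_mul]
    omega
  · simp only [List.mem_flatten, List.mem_map]
    rintro A ⟨_, ⟨I, -, rfl⟩, hA⟩
    exact isCnotOrZRotation_of_mem_monomialGates _ _ A hA
  · simp_rw [List.prod_flatten, List.map_map, Finset.smul_sum, smul_smul]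
    rw [exp_sum_smul_pauliZ]
    refine congrArg List.prod (List.map_congr_left fun I hI => ?_)
    exact prod_monomialGates _ (Finset.mem_filter.mp (Finset.mem_toList.mp hI)).2

/-- For every `D ≥ 1` and real coefficients `α I` on the nonempty subsets
`I` of `Fin D`, the unitary `exp(-j ∑_{∅ ≠ I ⊆ Fin D} α_I Z_I)` is a product of at most
`(D-1)·2^D + 1` matrices, each of which is a CNOT gate or a single-qubit Z-rotation
`exp(-j·θ·Z_{{q}})`. -/
theorem monomial_hamiltonian_synthesis {D : ℕ} (hD : 1 ≤ D)
    (α : Finset (Fin D) → ℝ) :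
    ∃ L : List (Matrix (Fin D → Bool) (Fin D → Bool) ℂ),
      L.length ≤ (D - 1) * 2 ^ D + 1 ∧
      (∀ A ∈ L,
        (∃ c t : Fin D, c ≠ t ∧ A = CNOT c t) ∨
        (∃ (q : Fin D) (θ : ℝ),
          A = NormedSpace.exp ((-Complex.I * (θ : ℂ)) • PauliZ {q}))) ∧
      L.prod = NormedSpace.exp ((-Complex.I) •
        ∑ I ∈ Finset.univ.filter (fun I : Finset (Fin D) => I.Nonempty),
          (α I : ℂ) • PauliZ I) :=
  monomial_hamiltonian_synthesis_general α
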